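/- Let δ be a derivation on a ring R, M an R-bimodule, d a δ-derivation on M, and ₗF_r a symmetric Gabriel filter induced by a left Gabriel filter F_l and a right Gabriel filter F_r. If M is torsion-free for the induced symmetric torsion theory (ₗt_r(M) = 0), then d extends to a derivation on the symmetric module of quotients ₗM_r such that d q_M = q_M d. -/

import Mathlib

open MulOpposite TensorProduct

/-- A derivation on a ring `S`: an additive map satisfying the Leibniz rule
`δ (a * b) = δ a * b + a * δ b`. -/
def IsDerivation {S : Type*} [Ring S] (δ : S → S) : Prop :=
  (∀ a b : S, δ (a + b) = δ a + δ b) ∧ (∀ a b : S, δ (a * b) = δ a * b + a * δ b)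

/-- A Gabriel filter of left ideals of a ring `S`.  Taking `S = Rᵐᵒᵖ`, this encodes a
Gabriel filter of right ideals of `R`. -/
structure GabrielFilter (S : Type*) [Ring S] where
  sets : Set (Ideal S)
  top_mem : ⊤ ∈ sets
  mono : ∀ ⦃I J : Ideal S⦄, I ∈ sets → I ≤ J → J ∈ sets
  inf_mem : ∀ ⦃I J : Ideal S⦄, I ∈ sets → J ∈ sets → I ⊓ J ∈ sets
  quot_mem : ∀ ⦃I : Ideal S⦄, I ∈ sets → ∀ s : S,
    Submodule.comap (LinearMap.toSpanSingleton S S s) I ∈ sets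
  trans : ∀ ⦃I J : Ideal S⦄, J ∈ sets →
    (∀ s ∈ J, Submodule.comap (LinearMap.toSpanSingleton S S s) I ∈ sets) → I ∈ sets

/-- The torsion set of a module for the torsion theory corresponding to a filter `𝔉` of
ideals: the elements whose annihilator belongs to `𝔉`. -/
def torsionSet {S : Type*} [Ring S] (𝔉 : Set (Ideal S)) (M : Type*) [AddCommGroup M]
    [Module S M] : Set M :=
  {x : M | LinearMap.ker (LinearMap.toSpanSingleton S M x) ∈ 𝔉}

/-- The enveloping ring `R ⊗_ℤ Rᵐᵒᵖ`; an `R`-bimodule is the same thing as a right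
`R ⊗_ℤ Rᵐᵒᵖ`-module, i.e. a left `(R ⊗_ℤ Rᵐᵒᵖ)ᵐᵒᵖ`-module, via `x • (r ⊗ s) = s x r`. -/
abbrev Env (R : Type*) [Ring R] := R ⊗[ℤ] Rᵐᵒᵖ

/-- The left annihilator of an element of an `R`-bimodule, a left ideal of `R`:
`ann_l(x) = {s : R | s • x = 0}`, where the left action of `s` is the action of
`1 ⊗ op s`. -/
def lAnn {R : Type*} [Ring R] (M : Type*) [AddCommGroup M] [Module (Env R)ᵐᵒᵖ M]
    (x : M) : Ideal R where
  carrier := {s : R | op ((1 : R) ⊗ₜ[ℤ] op s) • x = 0}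
  zero_mem' := by simp <;> first | exact zero_smul (Env R)ᵐᵒᵖ x | exact (zero_smul (Env R)ᵐᵒᵖ x :)
  add_mem' := by
    intro a b ha hb
    simp only [Set.mem_setOf_eq] at *
    rw [show ((1 : R) ⊗ₜ[ℤ] op (a + b)) = (1 : R) ⊗ₜ[ℤ] op a + (1 : R) ⊗ₜ[ℤ] op b by
        rw [op_add, TensorProduct.tmul_add],
      op_add, add_smul, ha, hb, add_zero]
  smul_mem' := by
    intro c s hs
    simp only [Set.mem_setOf_eq, smul_eq_mul] at *
    rw [show ((1 : R) ⊗ₜ[ℤ] op (c * s)) = ((1 : R) ⊗ₜ[ℤ] op s) * ((1 : R) ⊗ₜ[ℤ] op c) by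
        rw [Algebra.TensorProduct.tmul_mul_tmul, one_mul, ← op_mul],
      op_mul, mul_smul, hs, smul_zero]

/-- The right annihilator of an element of an `R`-bimodule, a right ideal of `R`
(encoded as a left ideal of `Rᵐᵒᵖ`): `ann_r(x) = {r | x • r = 0}`, where the right
action of `r` is the action of `r ⊗ 1`. -/
def rAnn {R : Type*} [Ring R] (M : Type*) [AddCommGroup M] [Module (Env R)ᵐᵒᵖ M]
    (x : M) : Ideal Rᵐᵒᵖ where
  carrier := {j : Rᵐᵒᵖ | op (unop j ⊗ₜ[ℤ] (1 : Rᵐᵒᵖ)) • x = 0}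
  zero_mem' := by simp <;> first | exact zero_smul (Env R)ᵐᵒᵖ x | exact (zero_smul (Env R)ᵐᵒᵖ x :)
  add_mem' := by
    intro a b ha hb
    simp only [Set.mem_setOf_eq] at *
    rw [show (unop (a + b) ⊗ₜ[ℤ] (1 : Rᵐᵒᵖ)) =
          unop a ⊗ₜ[ℤ] (1 : Rᵐᵒᵖ) + unop b ⊗ₜ[ℤ] (1 : Rᵐᵒᵖ) by
        rw [unop_add, TensorProduct.add_tmul],
      op_add, add_smul, ha, hb, add_zero]
  smul_mem' := by
    intro c j hj
    simp only [Set.mem_setOf_eq, smul_eq_mul] at *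
    rw [show (unop (c * j) ⊗ₜ[ℤ] (1 : Rᵐᵒᵖ)) =
          (unop j ⊗ₜ[ℤ] (1 : Rᵐᵒᵖ)) * (unop c ⊗ₜ[ℤ] (1 : Rᵐᵒᵖ)) by
        rw [Algebra.TensorProduct.tmul_mul_tmul, one_mul, unop_mul],
      op_mul, mul_smul, hj, smul_zero]

/-- The symmetric annihilator of an element of a bimodule: the right ideal
`{t ∈ R ⊗_ℤ Rᵐᵒᵖ | x t = 0}`. -/
def symAnn {R : Type*} [Ring R] (M : Type*) [AddCommGroup M] [Module (Env R)ᵐᵒᵖ M]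
    (x : M) : Ideal (Env R)ᵐᵒᵖ :=
  LinearMap.ker (LinearMap.toSpanSingleton (Env R)ᵐᵒᵖ M x)

/-- The right ideal `J ⊗ Rᵐᵒᵖ + R ⊗ I` of `R ⊗_ℤ Rᵐᵒᵖ` generated by a left ideal `I`
and a right ideal `J` of `R`. -/
def symGen {R : Type*} [Ring R] (I : Ideal R) (J : Ideal Rᵐᵒᵖ) : Ideal (Env R)ᵐᵒᵖ :=
  Ideal.span ((fun j : Rᵐᵒᵖ => op (unop j ⊗ₜ[ℤ] (1 : Rᵐᵒᵖ))) '' (J : Set Rᵐᵒᵖ) ∪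
    (fun i : R => op ((1 : R) ⊗ₜ[ℤ] op i)) '' (I : Set R))

/-- The symmetric Gabriel filter induced by a left Gabriel filter `Fl` and a right
Gabriel filter `Fr`: the right ideals of `R ⊗_ℤ Rᵐᵒᵖ` containing `J ⊗ Rᵐᵒᵖ + R ⊗ I` for
some `I ∈ Fl` and `J ∈ Fr`. -/
def symSets {R : Type*} [Ring R] (Fl : GabrielFilter R) (Fr : GabrielFilter Rᵐᵒᵖ) :
    Set (Ideal (Env R)ᵐᵒᵖ) :=
  {K | ∃ I ∈ Fl.sets, ∃ J ∈ Fr.sets, symGen I J ≤ K}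

/-- The torsion submodule of a bimodule for the symmetric torsion theory induced by `Fl`
and `Fr`: `ₗt_r(M) = t_l(M) ∩ t_r(M)`. -/
def symTorsion {R : Type*} [Ring R] (Fl : GabrielFilter R) (Fr : GabrielFilter Rᵐᵒᵖ)
    (M : Type*) [AddCommGroup M] [Module (Env R)ᵐᵒᵖ M] : Set M :=
  {x : M | lAnn M x ∈ Fl.sets} ∩ {x : M | rAnn M x ∈ Fr.sets}

/-- `δ'` is the derivation induced on `R ⊗_ℤ Rᵐᵒᵖ` by the derivation `δ` on `R`:
`δ̄(r ⊗ s) = δ r ⊗ s + r ⊗ δ s`. -/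
def IsInducedDerivation {R : Type*} [Ring R] (δ : R → R) (δ' : Env R → Env R) : Prop :=
  (∀ a b : Env R, δ' (a + b) = δ' a + δ' b) ∧
    ∀ r s : R, δ' (r ⊗ₜ[ℤ] op s) = δ r ⊗ₜ[ℤ] op s + r ⊗ₜ[ℤ] op (δ s)

/-- `d` is a `δ`-derivation on the `R`-bimodule `M`: `d` is additive,
`d (x r) = (d x) r + x (δ r)` and `d (s x) = (δ s) x + s (d x)`. -/
def IsBimodDerivation {R : Type*} [Ring R] (δ : R → R) {M : Type*} [AddCommGroup M]
    [Module (Env R)ᵐᵒᵖ M] (d : M → M) : Prop :=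
  (∀ x y : M, d (x + y) = d x + d y) ∧
  (∀ (x : M) (r : R),
    d (op (r ⊗ₜ[ℤ] (1 : Rᵐᵒᵖ)) • x) =
      op (r ⊗ₜ[ℤ] (1 : Rᵐᵒᵖ)) • d x + op (δ r ⊗ₜ[ℤ] (1 : Rᵐᵒᵖ)) • x) ∧
  (∀ (x : M) (s : R),
    d (op ((1 : R) ⊗ₜ[ℤ] op s) • x) =
      op ((1 : R) ⊗ₜ[ℤ] op (δ s)) • x + op ((1 : R) ⊗ₜ[ℤ] op s) • d x)

/-- The symmetric filter induced by `Fl` and `Fr` is differential: for every `I` in the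
filter there is `K` in the filter with `δ̄(K) ⊆ I` for all derivations `δ` on `R`. -/
def IsSymDifferential {R : Type*} [Ring R] (Fl : GabrielFilter R)
    (Fr : GabrielFilter Rᵐᵒᵖ) : Prop :=
  ∀ I ∈ symSets Fl Fr, ∃ K ∈ symSets Fl Fr, ∀ δ : R → R, IsDerivation δ →
    ∀ δ' : Env R → Env R, IsInducedDerivation δ δ' →
      ∀ t : (Env R)ᵐᵒᵖ, t ∈ K → op (δ' (unop t)) ∈ I

/-- `q : M → Q` realizes `Q` as the symmetric module of quotients of the bimodule `M`
with respect to the symmetric filter induced by `Fl` and `Fr`: the kernel of `q` is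
`ₗt_r(M)`, `Q` is torsion free, the cokernel of `q` is torsion, and `Q` is closed. -/
structure IsSymModuleOfQuotients {R : Type*} [Ring R] (Fl : GabrielFilter R)
    (Fr : GabrielFilter Rᵐᵒᵖ) {M Q : Type*} [AddCommGroup M] [Module (Env R)ᵐᵒᵖ M]
    [AddCommGroup Q] [Module (Env R)ᵐᵒᵖ Q] (q : M →ₗ[(Env R)ᵐᵒᵖ] Q) : Prop where
  ker_eq : (LinearMap.ker q : Set M) = symTorsion Fl Fr M
  torsionFree : symTorsion Fl Fr Q = {0}
  coker_torsion : ∀ y : Q,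
    Submodule.comap (LinearMap.toSpanSingleton (Env R)ᵐᵒᵖ Q y) (LinearMap.range q) ∈
      symSets Fl Fr
  closed : ∀ K ∈ symSets Fl Fr, ∀ f : ↥K →ₗ[(Env R)ᵐᵒᵖ] Q,
    ∃ g : (Env R)ᵐᵒᵖ →ₗ[(Env R)ᵐᵒᵖ] Q, ∀ t : ↥K, g ↑t = f t

/-! Since `ₗt_r(M) = 0`, the map `q_M` is injective, so for `y ∈ ₗM_r` every `t` in the ideal
`K_y = {t | t y ∈ q_M M} ∈ ₗF_r` determines a unique `x_t ∈ M` with `q_M x_t = t y`. By the Leibniz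
rules for `d` and `δ̄`, `t ↦ q_M (d x_t) - δ̄(t) y` is a homomorphism `K_y → ₗM_r`, and closedness of
`ₗM_r` extends it to `R ⊗ Rᵒᵖ`; its value at `1` is `d' y`. As `ₗM_r` is torsion free, `d'` is
pinned down by the identities `t d'(y) = q_M (d x) - δ̄(t) y` for `q_M x = t y`, and additivity,
the Leibniz rules and `d' q_M = q_M d` follow by testing them against ideals of `ₗF_r`. -/

namespace IsDerivation

variable {R : Type*} [Ring R] {δ : R → R}

theorem map_one (hδ : IsDerivation δ) : δ 1 = 0 := by
  simpa using hδ.2 1 1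

/-- The derivation `δ̄ (r ⊗ s) = δ r ⊗ s + r ⊗ δ s` of the enveloping ring, transported to
`(Env R)ᵐᵒᵖ`, the ring that acts on bimodules. -/
noncomputable def envDer (hδ : IsDerivation δ) : (Env R)ᵐᵒᵖ →+ (Env R)ᵐᵒᵖ :=
  AddMonoidHom.mulOp
    (TensorProduct.map (AddMonoidHom.mk' δ hδ.1).toIntLinearMap LinearMap.id +
      TensorProduct.map LinearMap.id
        (AddMonoidHom.mulOp (AddMonoidHom.mk' δ hδ.1)).toIntLinearMap).toAddMonoidHom

theorem envDer_op_tmul (hδ : IsDerivation δ) (r : R) (s : Rᵐᵒᵖ) :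
    hδ.envDer (op (r ⊗ₜ[ℤ] s)) = op (δ r ⊗ₜ[ℤ] s) + op (r ⊗ₜ[ℤ] op (δ (unop s))) :=
  rfl

theorem envDer_mul (hδ : IsDerivation δ) (a b : (Env R)ᵐᵒᵖ) :
    hδ.envDer (a * b) = a * hδ.envDer b + hδ.envDer a * b := by
  induction a using MulOpposite.rec' with | _ a => ?_
  induction b using MulOpposite.rec' with | _ b => ?_
  induction a using TensorProduct.induction_on with
  | zero => simp
  | add a₁ a₂ h₁ h₂ => simp only [op_add, add_mul, map_add, h₁, h₂]; abel
  | tmul r s =>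
    induction b using TensorProduct.induction_on with
    | zero => simp
    | add b₁ b₂ h₁ h₂ => simp only [op_add, mul_add, map_add, h₁, h₂]; abel
    | tmul r' s' =>
      simp only [← op_mul, Algebra.TensorProduct.tmul_mul_tmul, envDer_op_tmul, unop_mul,
        hδ.2, op_add, add_mul, mul_add, TensorProduct.add_tmul, TensorProduct.tmul_add]
      simp only [op_mul, op_unop]
      abel

theorem envDer_one (hδ : IsDerivation δ) : hδ.envDer 1 = 0 := by
  simpa using hδ.envDer_mul 1 1

end IsDerivation

namespace IsBimodDerivation

variable {R : Type*} [Ring R] {δ : R → R} {M : Type*} [AddCommGroup M] [Module (Env R)ᵐᵒᵖ M]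
  {d : M → M}

theorem map_smul (hδ : IsDerivation δ) (hd : IsBimodDerivation δ d) (t : (Env R)ᵐᵒᵖ) (x : M) :
    d (t • x) = t • d x + hδ.envDer t • x := by
  induction t using MulOpposite.rec' with | _ u => ?_
  induction u using TensorProduct.induction_on with
  | zero =>
    -- `zero_smul` is stated for the ring's `0`, which is not reducibly the additive `0` of
    -- `(Env R)ᵐᵒᵖ` that `op_zero` and `map_zero` produce
    have h0 : ∀ z : M, op (0 : Env R) • z = 0 := fun z => zero_smul (Env R)ᵐᵒᵖ z
    rw [op_zero, map_zero, ← op_zero, h0, h0, add_zero]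
    exact (AddMonoidHom.mk' d hd.1).map_zero
  | add u₁ u₂ h₁ h₂ => simp only [op_add, add_smul, hd.1, h₁, h₂, map_add]; abel
  | tmul r s =>
    have hsplit :
        op (r ⊗ₜ[ℤ] s) = op ((1 : R) ⊗ₜ[ℤ] op (unop s)) * op (r ⊗ₜ[ℤ] (1 : Rᵐᵒᵖ)) := by
      rw [← op_mul, Algebra.TensorProduct.tmul_mul_tmul, mul_one, one_mul, op_unop]
    conv_lhs => rw [hsplit, mul_smul, hd.2.2, hd.2.1]
    rw [hδ.envDer_op_tmul]
    simp only [smul_add, ← mul_smul, ← op_mul, Algebra.TensorProduct.tmul_mul_tmul, one_mul,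
      mul_one, op_unop, add_smul]
    abel

theorem of_map_smul (hδ : IsDerivation δ) (hadd : ∀ x y : M, d (x + y) = d x + d y)
    (hsmul : ∀ (t : (Env R)ᵐᵒᵖ) (x : M), d (t • x) = t • d x + hδ.envDer t • x) :
    IsBimodDerivation δ d := by
  refine ⟨hadd, fun x r => ?_, fun x s => ?_⟩
  · rw [hsmul, hδ.envDer_op_tmul, unop_one, hδ.map_one, op_zero, TensorProduct.tmul_zero,
      op_zero, add_zero]
  · rw [hsmul, hδ.envDer_op_tmul, hδ.map_one, TensorProduct.zero_tmul, op_zero, zero_add,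
      unop_op, add_comm]

end IsBimodDerivation

section SymFilter

variable {R : Type*} [Ring R] {Fl : GabrielFilter R} {Fr : GabrielFilter Rᵐᵒᵖ}

theorem mem_symGen_left {I : Ideal R} {J : Ideal Rᵐᵒᵖ} {j : Rᵐᵒᵖ} (hj : j ∈ J) :
    op (unop j ⊗ₜ[ℤ] (1 : Rᵐᵒᵖ)) ∈ symGen I J :=
  Ideal.subset_span (Or.inl ⟨j, hj, rfl⟩)

theorem mem_symGen_right {I : Ideal R} {J : Ideal Rᵐᵒᵖ} {i : R} (hi : i ∈ I) :
    op ((1 : R) ⊗ₜ[ℤ] op i) ∈ symGen I J :=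
  Ideal.subset_span (Or.inr ⟨i, hi, rfl⟩)

theorem symGen_mono {I I' : Ideal R} {J J' : Ideal Rᵐᵒᵖ} (hI : I ≤ I') (hJ : J ≤ J') :
    symGen I J ≤ symGen I' J' :=
  Ideal.span_mono (Set.union_subset_union (Set.image_mono hJ) (Set.image_mono hI))

theorem inf_mem_symSets {K K' : Ideal (Env R)ᵐᵒᵖ} (hK : K ∈ symSets Fl Fr)
    (hK' : K' ∈ symSets Fl Fr) : K ⊓ K' ∈ symSets Fl Fr := by
  obtain ⟨I, hI, J, hJ, hle⟩ := hK
  obtain ⟨I', hI', J', hJ', hle'⟩ := hK'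
  exact ⟨I ⊓ I', Fl.inf_mem hI hI', J ⊓ J', Fr.inf_mem hJ hJ',
    le_inf ((symGen_mono inf_le_left inf_le_left).trans hle)
      ((symGen_mono inf_le_right inf_le_right).trans hle')⟩

theorem eq_of_forall_mem_symSets_smul_eq {Q : Type*} [AddCommGroup Q] [Module (Env R)ᵐᵒᵖ Q]
    (hQ : symTorsion Fl Fr Q = {0}) {K : Ideal (Env R)ᵐᵒᵖ} (hK : K ∈ symSets Fl Fr)
    {y₁ y₂ : Q} (h : ∀ t ∈ K, t • y₁ = t • y₂) : y₁ = y₂ := by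
  obtain ⟨I, hI, J, hJ, hle⟩ := hK
  have hann : ∀ t ∈ K, t • (y₁ - y₂) = 0 := fun t ht => by rw [smul_sub, h t ht, sub_self]
  have htorsion : y₁ - y₂ ∈ symTorsion Fl Fr Q :=
    ⟨Fl.mono hI fun i hi => hann _ (hle (mem_symGen_right hi)),
      Fr.mono hJ fun j hj => hann _ (hle (mem_symGen_left hj))⟩
  rw [hQ] at htorsion
  exact sub_eq_zero.mp htorsion

end SymFilter

theorem IsSymModuleOfQuotients.injective {R : Type*} [Ring R] {Fl : GabrielFilter R}
    {Fr : GabrielFilter Rᵐᵒᵖ} {M Q : Type*} [AddCommGroup M] [Module (Env R)ᵐᵒᵖ M]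
    [AddCommGroup Q] [Module (Env R)ᵐᵒᵖ Q] {q : M →ₗ[(Env R)ᵐᵒᵖ] Q}
    (hq : IsSymModuleOfQuotients Fl Fr q) (hM : symTorsion Fl Fr M = {0}) :
    Function.Injective q := by
  rw [← LinearMap.ker_eq_bot, ← SetLike.coe_set_eq, hq.ker_eq, hM]
  rfl

section Extension

variable {R : Type*} [Ring R] {δ : R → R} {Fl : GabrielFilter R} {Fr : GabrielFilter Rᵐᵒᵖ}
  {M Q : Type*} [AddCommGroup M] [Module (Env R)ᵐᵒᵖ M] [AddCommGroup Q] [Module (Env R)ᵐᵒᵖ Q]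
  {d : M → M} {q : M →ₗ[(Env R)ᵐᵒᵖ] Q}

def IsInducedAlong (hδ : IsDerivation δ) (q : M →ₗ[(Env R)ᵐᵒᵖ] Q) (d : M → M) (d' : Q → Q) :
    Prop :=
  ∀ (y : Q) (t : (Env R)ᵐᵒᵖ) (x : M), q x = t • y → t • d' y = q (d x) - hδ.envDer t • y

theorem exists_isInducedAlong (hδ : IsDerivation δ) (hd : IsBimodDerivation δ d)
    (hq : IsSymModuleOfQuotients Fl Fr q) (hinj : Function.Injective q) :
    ∃ d' : Q → Q, IsInducedAlong hδ q d d' := by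
  suffices ∀ y : Q, ∃ w : Q, ∀ (t : (Env R)ᵐᵒᵖ) (x : M), q x = t • y →
      t • w = q (d x) - hδ.envDer t • y from
    ⟨fun y => (this y).choose, fun y => (this y).choose_spec⟩
  intro y
  set K := Submodule.comap (LinearMap.toSpanSingleton (Env R)ᵐᵒᵖ Q y) (LinearMap.range q)
  let m : K →ₗ[(Env R)ᵐᵒᵖ] M := (LinearEquiv.ofInjective q hinj).symm.toLinearMap ∘ₗ
    (LinearMap.toSpanSingleton (Env R)ᵐᵒᵖ Q y).restrict fun _ ht => ht
  have hm : ∀ t : K, q (m t) = (t : (Env R)ᵐᵒᵖ) • y := fun t =>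
    LinearEquiv.ofInjective_symm_apply (h := hinj) q _
  let f : K →ₗ[(Env R)ᵐᵒᵖ] Q :=
    { toFun := fun t => q (d (m t)) - hδ.envDer t • y
      map_add' := fun t₁ t₂ => by
        simp only [map_add, hd.1, Submodule.coe_add, add_smul]
        abel
      map_smul' := fun s t => by
        simp only [map_add, map_smul, hd.map_smul hδ, Submodule.coe_smul, smul_eq_mul,
          hδ.envDer_mul, add_smul, mul_smul, hm, RingHom.id_apply, smul_sub]
        abel }
  obtain ⟨g, hg⟩ := hq.closed K (hq.coker_torsion y) f
  refine ⟨g 1, fun t x hx => ?_⟩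
  have ht : t ∈ K := ⟨x, hx⟩
  have hmx : m ⟨t, ht⟩ = x := hinj (by rw [hm, hx])
  calc t • g 1 = g t := by rw [← map_smul, smul_eq_mul, mul_one]
    _ = q (d x) - hδ.envDer t • y := by rw [hg ⟨t, ht⟩, ← hmx]; rfl

namespace IsInducedAlong

variable {hδ : IsDerivation δ} {d' : Q → Q}

theorem commute (hd' : IsInducedAlong hδ q d d') (x : M) : d' (q x) = q (d x) := by
  have h := hd' (q x) 1 x (one_smul _ _).symm
  rwa [one_smul, hδ.envDer_one, (zero_smul (Env R)ᵐᵒᵖ (q x) : (0 : (Env R)ᵐᵒᵖ) • q x = 0),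
    sub_zero] at h

theorem map_add (hd : IsBimodDerivation δ d) (hq : IsSymModuleOfQuotients Fl Fr q)
    (hd' : IsInducedAlong hδ q d d') (y₁ y₂ : Q) : d' (y₁ + y₂) = d' y₁ + d' y₂ := by
  refine eq_of_forall_mem_symSets_smul_eq hq.torsionFree
    (inf_mem_symSets (hq.coker_torsion y₁) (hq.coker_torsion y₂))
    fun t ⟨⟨x₁, hx₁⟩, ⟨x₂, hx₂⟩⟩ => ?_
  have hx : q (x₁ + x₂) = t • (y₁ + y₂) := by rw [_root_.map_add, hx₁, hx₂, smul_add]; rfl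
  rw [smul_add, hd' _ t _ hx, hd' y₁ t x₁ hx₁, hd' y₂ t x₂ hx₂, hd.1, _root_.map_add, smul_add]
  abel

theorem map_smul (hq : IsSymModuleOfQuotients Fl Fr q) (hd' : IsInducedAlong hδ q d d')
    (c : (Env R)ᵐᵒᵖ) (y : Q) : d' (c • y) = c • d' y + hδ.envDer c • y := by
  refine eq_of_forall_mem_symSets_smul_eq hq.torsionFree (hq.coker_torsion (c • y))
    fun t ⟨x, hx⟩ => ?_
  have hx : q x = t • c • y := hx
  have hx' : q x = (t * c) • y := by rw [hx, mul_smul]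
  rw [hd' _ t x hx, smul_add, ← mul_smul t c, ← mul_smul t, hd' y _ x hx', hδ.envDer_mul,
    add_smul, mul_smul (hδ.envDer t)]
  abel

end IsInducedAlong

end Extension

/-- Let `δ` be a derivation on `R`, `M` an `R`-bimodule, `d` a
`δ`-derivation on `M` and `ₗF_r` the symmetric Gabriel filter induced by `Fl` and `Fr`.
If `M` is torsion free for the induced symmetric torsion theory (`ₗt_r(M) = 0`), then
`d` extends to a derivation `d'` on the symmetric module of quotients `ₗM_r` such that
`d' ∘ q_M = q_M ∘ d`. -/
theorem sym_extension_of_torsionFree {R : Type*} [Ring R]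
    (δ : R → R) (hδ : IsDerivation δ)
    (Fl : GabrielFilter R) (Fr : GabrielFilter Rᵐᵒᵖ)
    {M Q : Type*} [AddCommGroup M] [Module (Env R)ᵐᵒᵖ M]
    [AddCommGroup Q] [Module (Env R)ᵐᵒᵖ Q]
    (d : M → M) (hd : IsBimodDerivation δ d)
    (q : M →ₗ[(Env R)ᵐᵒᵖ] Q) (hq : IsSymModuleOfQuotients Fl Fr q)
    (hM : symTorsion Fl Fr M = {0}) :
    ∃ d' : Q → Q, IsBimodDerivation δ d' ∧ ∀ x : M, d' (q x) = q (d x) := by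
  obtain ⟨d', hd'⟩ := exists_isInducedAlong hδ hd hq (hq.injective hM)
  exact ⟨d', .of_map_smul hδ (hd'.map_add hd hq) (hd'.map_smul hq), hd'.commute⟩
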